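/- On M = ℝ³ with the regular Poisson structure Π = ∂_x ∧ ∂_y, the vector field μ = -x∂_x - y∂_y, viewed as a section of the dual of the cotangent Lie algebroid, is a momentum section with respect to the trivial connection, even though it vanishes along the z-axis; moreover μ' = μ - ∂_z is also a momentum section but is not of the form Π^♯η for any 1-form η. -/

import Mathlib

noncomputable section

/-- Points of `M = ℝ³`. -/
abbrev V3 : Type := Fin 3 → ℝ

/-- The sharp map of the regular Poisson structure `Π = ∂ₓ ∧ ∂ᵧ` on `ℝ³`,
acting on 1-forms written in coefficient form: `Π♯α = αₓ ∂ᵧ - αᵧ ∂ₓ`. -/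
def Psharp3 (α : V3 → V3) : V3 → V3 :=
  fun p => ![-(α p 1), α p 0, 0]

/-- The 1-form `⟨Dμ, α⟩ : v ↦ ⟨α, D_v μ⟩` (in coefficient form) for the trivial
connection `D` on `T*ℝ³`, whose dual covariant derivative of the vector field
`μ` is the directional derivative of its coefficient functions. -/
def Dmu3 (μ : V3 → V3) (α : V3 → V3) : V3 → V3 :=
  fun p i => ∑ j : Fin 3, α p j * fderiv ℝ μ p (Pi.single i 1) j

/-- `μ` is a momentum section of the cotangent Lie algebroid of
`(ℝ³, Π = ∂ₓ ∧ ∂ᵧ)` (anchor `-Π♯`) with respect to the trivial connection: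
`Π♯⟨Dμ,α⟩ = -Π♯α` for all 1-forms `α`. -/
def IsMomentum3 (μ : V3 → V3) : Prop :=
  ∀ α : V3 → V3, Psharp3 (Dmu3 μ α) = fun p => -(Psharp3 α p)

def L3 : V3 →L[ℝ] V3 :=
  ContinuousLinearMap.pi ![-(ContinuousLinearMap.proj 0), -(ContinuousLinearMap.proj 1), 0]

lemma hL (c : ℝ) (p : V3) :
    HasFDerivAt (fun p : V3 => ![-(p 0), -(p 1), c]) L3 p := by
  rw [hasFDerivAt_pi']
  intro i
  fin_cases i
  · simp [L3]; exact (hasFDerivAt_apply 0 p).neg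
  · simp [L3]; exact (hasFDerivAt_apply 1 p).neg
  · simpa [L3] using (hasFDerivAt_const c p)

lemma fder (c : ℝ) (p : V3) :
    fderiv ℝ (fun p : V3 => ![-(p 0), -(p 1), c]) p = L3 := (hL c p).fderiv

lemma mom (c : ℝ) : IsMomentum3 (fun p => ![-(p 0), -(p 1), c]) := by
  intro α
  funext p
  have h : ∀ i j : Fin 3,
      fderiv ℝ (fun p : V3 => ![-(p 0), -(p 1), c]) p (Pi.single i 1) j
        = L3 (Pi.single i 1) j := by
    intro i j; rw [fder]
  funext i
  fin_cases i <;>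
    simp [Psharp3, Dmu3, h, L3, Fin.sum_univ_three, Pi.single_apply]

/-- On `ℝ³` with `Π = ∂ₓ ∧ ∂ᵧ`, the vector field
`μ = -x∂ₓ - y∂ᵧ` is a momentum section for the trivial connection even though
it vanishes along the `z`-axis; moreover `μ' = μ - ∂_z` is also a momentum
section but is not of the form `Π♯η` for any 1-form `η`. -/
theorem statement14 :
    IsMomentum3 (fun p => ![-(p 0), -(p 1), 0])
    ∧ (∀ z : ℝ, (fun p : V3 => ![-(p 0), -(p 1), (0 : ℝ)]) ![0, 0, z] = 0)
    ∧ IsMomentum3 (fun p => ![-(p 0), -(p 1), -1])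
    ∧ ¬ ∃ η : V3 → V3,
        (fun p : V3 => ![-(p 0), -(p 1), (-1 : ℝ)]) = Psharp3 η := by
  refine ⟨mom 0, ?_, mom (-1), ?_⟩
  · intro z
    funext i
    fin_cases i <;> simp
  · rintro ⟨η, h⟩
    have := congrFun (congrFun h ![0,0,0]) 2
    simp [Psharp3] at this
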